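/- arXiv:2307.02264 — 2 statements merged into one kernel-verified Lean document; each statement's English description precedes it below -/
import Mathlib

section
/- There is a constant C>0, independent of ε, such that |F(J_ε)(0) − F(J_ε)(ξ) − |ξ|²| ≤ C(1+|ξ|²) for all ξ ∈ ℝⁿ and all ε>0, where F denotes the Fourier transform F(f)(ξ) = ∫_{ℝⁿ} e^{−i x·ξ} f(x) dx. -/
open MeasureTheory Topology Filter

noncomputable section

/-- `ℝⁿ` as a Euclidean space. -/
abbrev En (n : ℕ) := EuclideanSpace ℝ (Fin n)

/-- The radial kernel `J_ε(x) = ρ_ε(|x|)/|x|²` associated to a radial profile `ρε`. -/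
def Jker {n : ℕ} (ρε : ℝ → ℝ) (z : En n) : ℝ := ρε ‖z‖ / ‖z‖ ^ 2

/-- The constant `C_n = ∫_{S^{n-1}} |e₁ ⬝ σ|² dH^{n-1}(σ)`. -/
def sphereConst (n : ℕ) : ℝ :=
  if h : 0 < n then
    ∫ σ in Metric.sphere (0 : En n) 1,
      ((inner ℝ (EuclideanSpace.single (⟨0, h⟩ : Fin n) (1 : ℝ)) σ : ℝ)) ^ 2 ∂μH[(n : ℝ) - 1]
  else 0

/-- The standing assumptions on the family of mollifiers `ρ_ε` and the kernels
`J_ε(x) = ρ_ε(|x|)/|x|²`:  each `ρ_ε` is nonnegative, even, integrable, has normalized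
second moment `∫₀^∞ ρ_ε(r) r^{n-1} dr = 2/C_n`, vanishing tails as `ε ↘ 0`, and
`J_ε ∈ W^{1,1}(ℝⁿ)`. -/
def IsMollifierFamily (n : ℕ) (ρ : ℝ → ℝ → ℝ) : Prop :=
  (∀ ε : ℝ, 0 < ε → ∀ r : ℝ, 0 ≤ ρ ε r) ∧
  (∀ ε : ℝ, 0 < ε → ∀ r : ℝ, ρ ε (-r) = ρ ε r) ∧
  (∀ ε : ℝ, 0 < ε → Integrable (ρ ε)) ∧
  (∀ ε : ℝ, 0 < ε → (∫ r in Set.Ioi (0 : ℝ), ρ ε r * r ^ (n - 1)) = 2 / sphereConst n) ∧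
  (∀ δ : ℝ, 0 < δ →
    Tendsto (fun ε => ∫ r in Set.Ioi δ, ρ ε r * r ^ (n - 1)) (𝓝[>] (0 : ℝ)) (𝓝 0)) ∧
  (∀ ε : ℝ, 0 < ε → Integrable (Jker (ρ ε) : En n → ℝ) ∧
    (∀ᵐ x : En n, DifferentiableAt ℝ (Jker (ρ ε) : En n → ℝ) x) ∧
    Integrable (fun x : En n => ‖fderiv ℝ (Jker (ρ ε) : En n → ℝ) x‖))

/-- The Fourier transform with the convention `F f ξ = ∫_{ℝⁿ} e^{-i x·ξ} f(x) dx`. -/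
def fourierF {n : ℕ} (f : En n → ℝ) (ξ : En n) : ℂ :=
  ∫ x : En n, Complex.exp (-Complex.I * ((inner ℝ x ξ : ℝ) : ℂ)) * (f x : ℂ)

open Metric Set
open scoped ENNReal NNReal

/-!
Since `J_ε` is even, `F(J_ε)(0) - F(J_ε)(ξ) = ∫ (1 - cos (x·ξ)) J_ε(x) dx`. This is nonnegative,
and `1 - cos t ≤ t²/2` together with `|x·ξ| ≤ |x||ξ|` bounds it by `|ξ|²/2 · ∫ ρ_ε(|x|) dx`, which
in polar coordinates equals `|ξ|²/2 · n|B₁| · 2/C_n`, independently of `ε`.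

Polar coordinates apply only if the moment `∫₀^∞ ρ_ε(r) r^{n-1} dr` is a genuine integral rather
than the junk value of a non-integrable one, which is guaranteed by `C_n > 0`. The unit sphere has
finite `H^{n-1}`-measure, since `x ↦ x/|x|` is 2-Lipschitz on the boundary of the cube `[-1,1]ⁿ`,
a finite union of isometric copies of a bounded subset of `ℝ^{n-1}`; and the cap `{σ₀ ≥ 1/2}`
has positive measure, since it projects onto a ball of `ℝ^{n-1}`.
-/

namespace EuclideanSpace

variable {m : ℕ}

def insertCoord (i : Fin (m + 1)) (c : ℝ) (y : En m) : En (m + 1) :=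
  WithLp.toLp 2 (i.insertNth c y)

def removeCoord (i : Fin (m + 1)) (x : En (m + 1)) : En m :=
  WithLp.toLp 2 (i.removeNth x)

theorem insertCoord_apply_same (i : Fin (m + 1)) (c : ℝ) (y : En m) :
    insertCoord i c y i = c := by
  simp [insertCoord]

@[simp] theorem removeCoord_apply (i : Fin (m + 1)) (x : En (m + 1)) (j : Fin m) :
    removeCoord i x j = x (i.succAbove j) := rfl

theorem insertCoord_removeCoord (i : Fin (m + 1)) (x : En (m + 1)) :
    insertCoord i (x i) (removeCoord i x) = x := by
  simp [insertCoord, removeCoord]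

theorem removeCoord_insertCoord (i : Fin (m + 1)) (c : ℝ) (y : En m) :
    removeCoord i (insertCoord i c y) = y := by
  simp [insertCoord, removeCoord]

theorem insertCoord_sub (i : Fin (m + 1)) (a b : ℝ) (y z : En m) :
    insertCoord i a y - insertCoord i b z = insertCoord i (a - b) (y - z) := by
  ext j
  cases j using i.succAboveCases <;> simp [insertCoord]

theorem norm_insertCoord_sq (i : Fin (m + 1)) (c : ℝ) (y : En m) :
    ‖insertCoord i c y‖ ^ 2 = c ^ 2 + ‖y‖ ^ 2 := by
  simp [EuclideanSpace.norm_sq_eq, Fin.sum_univ_succAbove _ i, insertCoord]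

theorem dist_insertCoord_sq (i : Fin (m + 1)) (a b : ℝ) (y z : En m) :
    dist (insertCoord i a y) (insertCoord i b z) ^ 2 = (a - b) ^ 2 + dist y z ^ 2 := by
  rw [dist_eq_norm, dist_eq_norm, insertCoord_sub, norm_insertCoord_sq]

theorem isometry_insertCoord (i : Fin (m + 1)) (c : ℝ) : Isometry (insertCoord (m := m) i c) :=
  Isometry.of_dist_eq fun y z => by
    have := dist_insertCoord_sq i c c y z
    rw [sub_self, zero_pow two_ne_zero, zero_add] at this
    exact (sq_eq_sq₀ dist_nonneg dist_nonneg).1 this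

theorem lipschitzWith_removeCoord (i : Fin (m + 1)) : LipschitzWith 1 (removeCoord (m := m) i) :=
  LipschitzWith.of_dist_le_mul fun x y => by
    have := dist_insertCoord_sq i (x i) (y i) (removeCoord i x) (removeCoord i y)
    rw [insertCoord_removeCoord, insertCoord_removeCoord] at this
    rw [NNReal.coe_one, one_mul]
    exact pow_le_pow_iff_left₀ dist_nonneg dist_nonneg two_ne_zero |>.1 (by nlinarith)

end EuclideanSpace

theorem lipschitzOnWith_inv_norm_smul (E : Type*) [NormedAddCommGroup E] [NormedSpace ℝ E] :
    LipschitzOnWith 2 (fun x : E => ‖x‖⁻¹ • x) {x | 1 ≤ ‖x‖} := by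
  refine LipschitzOnWith.of_dist_le_mul fun x (hx : 1 ≤ ‖x‖) y (hy : 1 ≤ ‖y‖) => ?_
  have hx0 : 0 < ‖x‖ := one_pos.trans_le hx
  have hy0 : 0 < ‖y‖ := one_pos.trans_le hy
  have hsplit : ‖x‖⁻¹ • x - ‖y‖⁻¹ • y = ‖x‖⁻¹ • (x - y) + (‖x‖⁻¹ - ‖y‖⁻¹) • y := by
    rw [smul_sub, sub_smul]; abel
  have h₁ : ‖‖x‖⁻¹ • (x - y)‖ ≤ ‖x - y‖ := by
    rw [norm_smul, norm_inv, norm_norm]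
    exact mul_le_of_le_one_left (norm_nonneg _) (inv_le_one_of_one_le₀ hx)
  have h₂ : ‖(‖x‖⁻¹ - ‖y‖⁻¹) • y‖ ≤ ‖x - y‖ := by
    rw [norm_smul, Real.norm_eq_abs, inv_sub_inv hx0.ne' hy0.ne', abs_div,
      abs_of_pos (mul_pos hx0 hy0), div_mul_eq_mul_div, mul_div_mul_right _ _ hy0.ne', abs_sub_comm]
    exact (div_le_self (abs_nonneg _) hx).trans (abs_norm_sub_norm_le x y)
  rw [dist_eq_norm, dist_eq_norm, hsplit, NNReal.coe_two, two_mul]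
  exact (norm_add_le _ _).trans (add_le_add h₁ h₂)

open EuclideanSpace in
theorem sphere_subset_image_inv_norm_smul_cube_faces (m : ℕ) :
    sphere (0 : En (m + 1)) 1 ⊆ (fun x => ‖x‖⁻¹ • x) ''
      ⋃ p ∈ (univ : Set (Fin (m + 1))) ×ˢ ({-1, 1} : Set ℝ),
        insertCoord p.1 p.2 '' closedBall 0 √m := by
  intro σ hσ
  rw [mem_sphere_zero_iff_norm] at hσ
  -- dividing by the largest coordinate modulus puts `σ` on a face `{x i = ±1}` of the cube
  obtain ⟨i, -, hi⟩ := Finset.univ.exists_max_image (fun j => |σ j|) Finset.univ_nonempty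
  have hσi : σ i ≠ 0 := by
    intro h
    refine one_ne_zero (hσ.symm.trans (norm_eq_zero.2 ?_))
    ext j
    simpa [h] using hi j (Finset.mem_univ j)
  set M := |σ i|
  have hM : 0 < M := abs_pos.2 hσi
  set x := M⁻¹ • σ
  refine ⟨x, mem_biUnion (x := (i, x i)) ⟨mem_univ i, ?_⟩
    ⟨removeCoord i x, ?_, insertCoord_removeCoord i x⟩, ?_⟩
  · rcases hσi.lt_or_gt with h | h <;> simp [x, M, abs_of_neg, abs_of_pos, h, hσi]
  · have hx : ∀ j, x j ^ 2 ≤ 1 := fun j => by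
      rw [← sq_abs, sq_le_one_iff_abs_le_one, abs_abs]
      simpa [x, abs_mul, abs_of_pos hM, inv_mul_le_iff₀ hM] using hi j (Finset.mem_univ j)
    rw [mem_closedBall_zero_iff, EuclideanSpace.norm_eq]
    refine Real.sqrt_le_sqrt ?_
    simpa using Finset.sum_le_sum fun j (_ : j ∈ Finset.univ) => hx (i.succAbove j)
  · simp [x, norm_smul, hσ, smul_smul, abs_of_pos hM, hM.ne']

open EuclideanSpace in
theorem hausdorffMeasure_sphere_lt_top (m : ℕ) : μH[m] (sphere (0 : En (m + 1)) 1) < ∞ := by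
  set U := ⋃ p ∈ (univ : Set (Fin (m + 1))) ×ˢ ({-1, 1} : Set ℝ),
    insertCoord p.1 p.2 '' closedBall (0 : En m) √m
  have hU : U ⊆ {x | 1 ≤ ‖x‖} := by
    simp only [U, iUnion_subset_iff, image_subset_iff]
    rintro ⟨i, c⟩ ⟨-, hc⟩ y -
    have hc : c ^ 2 = 1 := by rcases hc with rfl | rfl <;> norm_num
    have := norm_insertCoord_sq i c y
    simp only [mem_preimage, mem_ofPred_eq]
    nlinarith [norm_nonneg (insertCoord i c y), sq_nonneg ‖y‖]
  have hU_lt_top : μH[m] U < ∞ := by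
    refine measure_biUnion_lt_top (finite_univ.prod (by simp)) fun p _ => ?_
    rw [(isometry_insertCoord p.1 p.2).hausdorffMeasure_image (.inl m.cast_nonneg)]
    exact measure_closedBall_lt_top (μ := (μH[m] : Measure (En m)))
  calc μH[m] (sphere (0 : En (m + 1)) 1)
      ≤ μH[m] ((fun x => ‖x‖⁻¹ • x) '' U) :=
        measure_mono (sphere_subset_image_inv_norm_smul_cube_faces m)
    _ ≤ (2 : ℝ≥0) ^ (m : ℝ) * μH[m] U :=
        ((lipschitzOnWith_inv_norm_smul _).mono hU).hausdorffMeasure_image_le m.cast_nonneg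
    _ < ∞ := ENNReal.mul_lt_top (by simp) hU_lt_top

open EuclideanSpace in
theorem hausdorffMeasure_sphere_inter_pos (m : ℕ) :
    0 < μH[m] (sphere (0 : En (m + 1)) 1 ∩ {σ | 1 / 2 ≤ σ 0}) := by
  have hball : closedBall (0 : En m) (1 / 2) ⊆
      removeCoord 0 '' (sphere (0 : En (m + 1)) 1 ∩ {σ | 1 / 2 ≤ σ 0}) := by
    intro y hy
    rw [mem_closedBall_zero_iff] at hy
    have hy2 : ‖y‖ ^ 2 ≤ 1 / 4 := by nlinarith [norm_nonneg y]
    refine ⟨insertCoord 0 √(1 - ‖y‖ ^ 2) y, ⟨?_, ?_⟩, removeCoord_insertCoord _ _ _⟩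
    · have := norm_insertCoord_sq 0 √(1 - ‖y‖ ^ 2) y
      rw [Real.sq_sqrt (by linarith), sub_add_cancel] at this
      rw [mem_sphere_zero_iff_norm]
      exact (pow_eq_one_iff_of_nonneg (norm_nonneg _) two_ne_zero).1 this
    · rw [mem_ofPred_eq, insertCoord_apply_same, Real.le_sqrt (by norm_num) (by linarith)]
      linarith
  calc 0 < μH[m] (closedBall (0 : En m) (1 / 2)) := measure_closedBall_pos _ _ one_half_pos
    _ ≤ μH[m] (removeCoord 0 '' (sphere (0 : En (m + 1)) 1 ∩ {σ | 1 / 2 ≤ σ 0})) :=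
        measure_mono hball
    _ ≤ (1 : ℝ≥0) ^ (m : ℝ) * μH[m] (sphere (0 : En (m + 1)) 1 ∩ {σ | 1 / 2 ≤ σ 0}) :=
        (lipschitzWith_removeCoord 0).hausdorffMeasure_image_le m.cast_nonneg _
    _ = _ := by simp

theorem sphereConst_pos {n : ℕ} (hn : 0 < n) : 0 < sphereConst n := by
  obtain ⟨m, rfl⟩ := Nat.exists_eq_add_one_of_ne_zero hn.ne'
  have hdim : ((m + 1 : ℕ) : ℝ) - 1 = m := by push_cast; ring
  have h0 : (⟨0, hn⟩ : Fin (m + 1)) = 0 := rfl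
  simp only [sphereConst, dif_pos hn, hdim, h0, EuclideanSpace.inner_single_left, map_one, one_mul]
  set S := sphere (0 : En (m + 1)) 1
  set cap := S ∩ {σ | 1 / 2 ≤ σ 0}
  have hS : μH[m] S < ∞ := hausdorffMeasure_sphere_lt_top m
  have hcap_sub : cap ⊆ S := inter_subset_left
  have hcap_meas : MeasurableSet cap :=
    isClosed_sphere.measurableSet.inter (measurableSet_le measurable_const (by fun_prop))
  have hint : IntegrableOn (fun σ : En (m + 1) => σ 0 ^ 2) S μH[m] := by
    refine .of_bound hS (by fun_prop) 1 ?_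
    filter_upwards [ae_restrict_mem isClosed_sphere.measurableSet] with σ hσ
    have := PiLp.norm_apply_le σ 0
    rw [mem_sphere_zero_iff_norm.1 hσ, Real.norm_eq_abs] at this
    rw [norm_pow, Real.norm_eq_abs]
    exact pow_le_one₀ (abs_nonneg _) this
  calc 0 < 1 / 4 * μH[m].real cap :=
        mul_pos (by norm_num) (ENNReal.toReal_pos (hausdorffMeasure_sphere_inter_pos m).ne'
          ((measure_mono hcap_sub).trans_lt hS).ne)
    _ ≤ ∫ σ in cap, σ 0 ^ 2 ∂μH[m] := by
        refine setIntegral_ge_of_const_le_real hcap_meas ((measure_mono hcap_sub).trans_lt hS).ne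
          (fun σ hσ => ?_) (hint.mono_set hcap_sub)
        have : 1 / 2 ≤ σ 0 := hσ.2
        nlinarith
    _ ≤ ∫ σ in S, σ 0 ^ 2 ∂μH[m] :=
        setIntegral_mono_set hint (.of_forall fun σ => sq_nonneg _) hcap_sub.eventuallyLE

/-- `c ≠ 0` excludes the junk value `0` of a non-integrable moment. -/
theorem integral_fun_norm_addHaar_of_moment_eq {E : Type*} [NormedAddCommGroup E]
    [NormedSpace ℝ E] [FiniteDimensional ℝ E] [MeasurableSpace E] [BorelSpace E] [Nontrivial E]
    (μ : Measure E) [μ.IsAddHaarMeasure] {f : ℝ → ℝ} {c : ℝ} (hc : c ≠ 0)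
    (hf : ∫ r in Ioi (0 : ℝ), f r * r ^ (Module.finrank ℝ E - 1) = c) :
    Integrable (fun x => f ‖x‖) μ ∧
      ∫ x, f ‖x‖ ∂μ = Module.finrank ℝ E * μ.real (ball 0 1) * c := by
  have hint : IntegrableOn (fun r => f r * r ^ (Module.finrank ℝ E - 1)) (Ioi 0) := by
    by_contra h
    exact hc (hf ▸ integral_undef h)
  simp_rw [mul_comm (f _)] at hf hint
  refine ⟨(integrable_fun_norm_addHaar μ).2 hint, ?_⟩
  simp_rw [integral_fun_norm_addHaar, nsmul_eq_mul, smul_eq_mul, hf, mul_assoc]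

theorem fourierF_eq_integral_cos {n : ℕ} {f : En n → ℝ} (hf : Integrable f)
    (hf_even : ∀ x, f (-x) = f x) (ξ : En n) :
    fourierF f ξ = ((∫ x, Real.cos (inner ℝ x ξ) * f x : ℝ) : ℂ) := by
  have hexp : ∀ x : En n, Complex.exp (-Complex.I * ((inner ℝ x ξ : ℝ) : ℂ)) =
      Complex.exp (((-inner ℝ x ξ : ℝ) : ℂ) * Complex.I) := fun x => by push_cast; ring_nf
  have hint : Integrable (fun x : En n =>
      Complex.exp (-Complex.I * ((inner ℝ x ξ : ℝ) : ℂ)) * (f x : ℂ)) :=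
    hf.ofReal.bdd_mul (c := 1) (by fun_prop)
      (.of_forall fun x => by rw [hexp, Complex.norm_exp_ofReal_mul_I])
  have hsin : ∫ x, Real.sin (inner ℝ x ξ) * f x = 0 := by
    have := integral_neg_eq_self (fun x : En n => Real.sin (inner ℝ x ξ) * f x) volume
    simp only [inner_neg_left, Real.sin_neg, hf_even, neg_mul, integral_neg] at this
    linarith
  apply Complex.ext
  · rw [fourierF, ← RCLike.re_eq_complex_re, ← integral_re hint]
    simp_rw [hexp, RCLike.re_to_complex, Complex.re_mul_ofReal, Complex.exp_ofReal_mul_I_re,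
      Real.cos_neg, Complex.ofReal_re]
  · rw [fourierF, ← RCLike.im_eq_complex_im, ← integral_im hint]
    simp_rw [hexp, RCLike.im_to_complex, Complex.im_mul_ofReal, Complex.exp_ofReal_mul_I_im,
      Real.sin_neg, neg_mul, integral_neg, hsin, Complex.ofReal_im, neg_zero]

theorem fourierF_zero_sub_fourierF {n : ℕ} {f : En n → ℝ} (hf : Integrable f)
    (hf_even : ∀ x, f (-x) = f x) (ξ : En n) :
    fourierF f 0 - fourierF f ξ = ((∫ x, (1 - Real.cos (inner ℝ x ξ)) * f x : ℝ) : ℂ) := by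
  have hcos : Integrable fun x => Real.cos (inner ℝ x ξ) * f x :=
    hf.bdd_mul (c := 1) (by fun_prop) (.of_forall fun x => Real.abs_cos_le_one _)
  simp_rw [fourierF_eq_integral_cos hf hf_even, inner_zero_right, Real.cos_zero, one_mul,
    ← Complex.ofReal_sub, ← integral_sub hf hcos, sub_mul, one_mul]

theorem one_sub_cos_inner_mul_Jker_le {n : ℕ} {ρε : ℝ → ℝ} (hρ : ∀ r, 0 ≤ ρε r) (x ξ : En n) :
    (1 - Real.cos (inner ℝ x ξ)) * Jker ρε x ≤ ‖ξ‖ ^ 2 / 2 * ρε ‖x‖ := by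
  rcases eq_or_ne x 0 with rfl | hx
  · simpa [Jker] using mul_nonneg (by positivity) (hρ 0)
  have hcos : 1 - Real.cos (inner ℝ x ξ) ≤ ‖x‖ ^ 2 * ‖ξ‖ ^ 2 / 2 := by
    have := Real.one_sub_sq_div_two_le_cos (x := inner ℝ x ξ)
    have := abs_real_inner_le_norm x ξ
    nlinarith [sq_abs (inner ℝ x ξ), abs_nonneg (inner ℝ x ξ)]
  calc (1 - Real.cos (inner ℝ x ξ)) * Jker ρε x
      ≤ ‖x‖ ^ 2 * ‖ξ‖ ^ 2 / 2 * (ρε ‖x‖ / ‖x‖ ^ 2) :=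
        mul_le_mul_of_nonneg_right hcos (div_nonneg (hρ _) (sq_nonneg _))
    _ = ‖ξ‖ ^ 2 / 2 * ρε ‖x‖ := by field_simp [norm_ne_zero_iff.2 hx]

theorem integral_one_sub_cos_inner_mul_Jker_le {n : ℕ} {ρε : ℝ → ℝ} (hρ : ∀ r, 0 ≤ ρε r)
    (hJ : Integrable (Jker ρε : En n → ℝ)) (hρ_int : Integrable fun x : En n => ρε ‖x‖)
    (ξ : En n) :
    ∫ x, (1 - Real.cos (inner ℝ x ξ)) * Jker ρε x ≤ ‖ξ‖ ^ 2 / 2 * ∫ x : En n, ρε ‖x‖ := by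
  rw [← integral_const_mul]
  refine integral_mono ?_ (hρ_int.const_mul _) (one_sub_cos_inner_mul_Jker_le hρ · ξ)
  refine hJ.bdd_mul (c := 2) (by fun_prop) (.of_forall fun x => ?_)
  rw [Real.norm_eq_abs, abs_le]
  constructor <;> linarith [Real.cos_le_one (inner ℝ x ξ), Real.neg_one_le_cos (inner ℝ x ξ)]

/-- Uniform bound `|F(J_ε)(0) - F(J_ε)(ξ) - |ξ|²| ≤ C (1 + |ξ|²)`. -/
theorem fourier_kernel_uniform_bound
    (n : ℕ) (hn : 0 < n) (ρ : ℝ → ℝ → ℝ) (hρ : IsMollifierFamily n ρ) :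
    ∃ C : ℝ, 0 < C ∧ ∀ ε : ℝ, 0 < ε → ∀ ξ : En n,
      ‖fourierF (Jker (ρ ε)) (0 : En n) - fourierF (Jker (ρ ε)) ξ - ((‖ξ‖ ^ 2 : ℝ) : ℂ)‖
        ≤ C * (1 + ‖ξ‖ ^ 2) := by
  obtain ⟨hρ_nonneg, -, -, hρ_moment, -, hJ⟩ := hρ
  have : NeZero n := ⟨hn.ne'⟩
  have hM : 0 < 2 / sphereConst n := div_pos two_pos (sphereConst_pos hn)
  set K := n * volume.real (ball (0 : En n) 1) * (2 / sphereConst n)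
  refine ⟨K / 2 + 1, by positivity, fun ε hε ξ => ?_⟩
  obtain ⟨hρ_int, hρ_integral⟩ := integral_fun_norm_addHaar_of_moment_eq
    (volume : Measure (En n)) hM.ne' (by simpa using hρ_moment ε hε)
  rw [fourierF_zero_sub_fourierF (hJ ε hε).1 (fun x => by simp [Jker]), ← Complex.ofReal_sub,
    Complex.norm_real, Real.norm_eq_abs, abs_le]
  set A := ∫ x, (1 - Real.cos (inner ℝ x ξ)) * Jker (ρ ε) x
  have hA_nonneg : 0 ≤ A := integral_nonneg fun x => mul_nonneg
    (by linarith [Real.cos_le_one (inner ℝ x ξ)]) (div_nonneg (hρ_nonneg ε hε _) (sq_nonneg _))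
  have hA_le : A ≤ ‖ξ‖ ^ 2 / 2 * K := by
    simpa [hρ_integral] using
      integral_one_sub_cos_inner_mul_Jker_le (hρ_nonneg ε hε) (hJ ε hε).1 hρ_int ξ
  have hK : 0 ≤ K := by positivity
  constructor <;> nlinarith [sq_nonneg ‖ξ‖]
end
end

section
/- Let ρ: ℝ → [0,∞) be an even integrable function with supp ρ ⊂ B_R(0), and let ρ_ε(r) := ε^{−n} ρ(r/ε). Fix δ > 0, x′ ∈ ℝ^{n−1}, and for x_n > 0 define a_ε(x_n) := ∫_{B_δ(x′)×(0,δ)} ρ_ε(|x − ŷ|) dy, where x = (x′, x_n) and ŷ = (y′, −y_n) denotes reflection of y = (y′,y_n) across {y_n = 0}. Then a_ε is independent of x′ and satisfies ‖a_ε‖²_{L²(ℝ₊)} ≤ C R ε, where C depends only on ρ and n. -/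
open MeasureTheory Topology Filter

noncomputable section

/-- The quantity `a_ε(xₙ) = ∫_{B_δ(x')×(0,δ)} ρ_ε(|x - ŷ|) dy`, where `x = (x', xₙ)` and
`ŷ = (y', -yₙ)`, for the rescaled mollifier `ρ_ε(r) = ε^{-n} ρ(r/ε)`. -/
def aeps (n : ℕ) (ρ₀ : ℝ → ℝ) (ε δ : ℝ) (x' : En (n - 1)) (xn : ℝ) : ℝ :=
  ∫ y in (Metric.ball x' δ) ×ˢ (Set.Ioo (0 : ℝ) δ),
    ρ₀ (Real.sqrt (‖x' - y.1‖ ^ 2 + (xn + y.2) ^ 2) / ε) / ε ^ n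

/-!
The substitution `z = x - ŷ = (x' - y', xₙ + yₙ)` is a measure-preserving change of variables
`ℝⁿ⁻¹ × ℝ → ℝⁿ`, so `|a_ε(xₙ)| ≤ ∫_{ℝⁿ} |ρ_ε(|z|)| dz = ∫_{ℝⁿ} |ρ(|z|)| dz =: W`, and `W < ∞` by
polar coordinates since `ρ` is integrable and vanishes outside `[-R, R]`. As `|x - ŷ| > xₙ` on the
domain of integration, `a_ε(xₙ) = 0` for `xₙ ≥ R ε`, whence `‖a_ε‖²_{L²(ℝ₊)} ≤ W² R ε`.
Independence of `x'` is translation invariance of Lebesgue measure in `y'`.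
-/

open Set Metric

namespace EuclideanSpace

def splitLast (m : ℕ) : En (m + 1) ≃ᵐ En m × ℝ :=
  (MeasurableEquiv.toLp 2 (Fin (m + 1) → ℝ)).symm.trans <|
  (MeasurableEquiv.piFinSuccAbove (fun _ => ℝ) (Fin.last m)).trans <|
  MeasurableEquiv.prodComm.trans <|
  MeasurableEquiv.prodCongr (MeasurableEquiv.toLp 2 (Fin m → ℝ)) (MeasurableEquiv.refl ℝ)

theorem measurePreserving_splitLast (m : ℕ) :
    MeasurePreserving (splitLast m) volume volume := by
  have hswap : MeasurePreserving (MeasurableEquiv.prodComm : ℝ × (Fin m → ℝ) ≃ᵐ _)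
      volume volume := by
    rw [Measure.volume_eq_prod, Measure.volume_eq_prod]
    exact Measure.measurePreserving_swap
  have htoLp : MeasurePreserving
      (MeasurableEquiv.prodCongr (MeasurableEquiv.toLp 2 (Fin m → ℝ)) (MeasurableEquiv.refl ℝ))
      volume volume := by
    rw [Measure.volume_eq_prod, Measure.volume_eq_prod]
    exact (volume_preserving_symm_measurableEquiv_toLp (Fin m)).symm.prod (.id _)
  exact (volume_preserving_symm_measurableEquiv_toLp _).trans <|
    (volume_preserving_piFinSuccAbove (fun _ => ℝ) (Fin.last m)).trans (hswap.trans htoLp)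

theorem splitLast_apply (m : ℕ) (x : En (m + 1)) :
    splitLast m x = (WithLp.toLp 2 fun i => x ((Fin.last m).succAbove i), x (Fin.last m)) :=
  rfl

theorem norm_sq_splitLast (m : ℕ) (x : En (m + 1)) :
    ‖(splitLast m x).1‖ ^ 2 + (splitLast m x).2 ^ 2 = ‖x‖ ^ 2 := by
  simp only [splitLast_apply, Fin.succAbove_last, EuclideanSpace.norm_sq_eq, Real.norm_eq_abs,
    sq_abs, Fin.sum_univ_castSucc]

theorem norm_splitLast_symm (m : ℕ) (u : En m) (t : ℝ) :
    ‖(splitLast m).symm (u, t)‖ = √(‖u‖ ^ 2 + t ^ 2) := by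
  have h := norm_sq_splitLast m ((splitLast m).symm (u, t))
  rw [MeasurableEquiv.apply_symm_apply] at h
  rw [h, Real.sqrt_sq (norm_nonneg _)]

end EuclideanSpace

theorem norm_div_eq_norm_inv_smul {E : Type*} [NormedAddCommGroup E] [NormedSpace ℝ E] (x : E)
    {ε : ℝ} (hε : 0 ≤ ε) : ‖x‖ / ε = ‖ε⁻¹ • x‖ := by
  rw [norm_smul, Real.norm_of_nonneg (inv_nonneg.2 hε), inv_mul_eq_div]

section Radial

variable {E F : Type*} [NormedAddCommGroup E] [NormedSpace ℝ E]
  [FiniteDimensional ℝ E] [MeasurableSpace E] [BorelSpace E] [NormedAddCommGroup F]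
  (μ : Measure E) [μ.IsAddHaarMeasure]

theorem integrable_fun_norm_of_eq_zero_of_le [Nontrivial E] [NormedSpace ℝ F] {f : ℝ → F}
    (hf : Integrable f) {R : ℝ} (hR : ∀ r, R ≤ |r| → f r = 0) :
    Integrable (fun x : E => f ‖x‖) μ := by
  rw [integrable_fun_norm_addHaar μ]
  have hIoc : IntegrableOn (fun y : ℝ => y ^ (Module.finrank ℝ E - 1) • f y) (Ioc 0 R) :=
    hf.integrableOn.continuousOn_smul_of_subset (continuous_pow _).continuousOn
      isCompact_Icc measurableSet_Ioc Ioc_subset_Icc_self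
  have hIoi : IntegrableOn (fun y : ℝ => y ^ (Module.finrank ℝ E - 1) • f y) (Ioi R) := by
    refine integrableOn_zero.congr_fun (fun y hy => ?_) measurableSet_Ioi
    simp [hR y ((le_of_lt hy).trans (le_abs_self y))]
  refine (hIoc.union hIoi).mono_set fun y hy => ?_
  rcases le_or_gt y R with h | h
  exacts [Or.inl ⟨hy, h⟩, Or.inr h]

theorem integrable_fun_norm_div {f : ℝ → F} (hf : Integrable (fun x : E => f ‖x‖) μ) {ε : ℝ}
    (hε : 0 < ε) : Integrable (fun x : E => f (‖x‖ / ε)) μ := by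
  simp_rw [norm_div_eq_norm_inv_smul _ hε.le]
  exact hf.comp_smul (inv_ne_zero hε.ne')

theorem integral_fun_norm_div (f : ℝ → ℝ) {ε : ℝ} (hε : 0 < ε) :
    ∫ x : E, f (‖x‖ / ε) / ε ^ Module.finrank ℝ E ∂μ = ∫ x, f ‖x‖ ∂μ := by
  simp_rw [integral_div, norm_div_eq_norm_inv_smul _ hε.le,
    Measure.integral_comp_inv_smul_of_nonneg μ (fun x => f ‖x‖) hε.le, smul_eq_mul]
  field_simp

end Radial

namespace EuclideanSpace

/-- `x - ŷ = (x' - y', xₙ + yₙ)`, where `x = (x', xₙ)` and `ŷ = (y', -yₙ)` is the reflection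
of `y = (y', yₙ)`. -/
def subReflect {m : ℕ} (x' : En m) (xn : ℝ) : En m × ℝ ≃ᵐ En (m + 1) :=
  (MeasurableEquiv.prodCongr (MeasurableEquiv.subLeft x') (MeasurableEquiv.addLeft xn)).trans
    (splitLast m).symm

theorem measurePreserving_subReflect {m : ℕ} (x' : En m) (xn : ℝ) :
    MeasurePreserving (subReflect x' xn) volume volume := by
  refine MeasurePreserving.trans ?_ (measurePreserving_splitLast m).symm
  rw [Measure.volume_eq_prod]
  exact (Measure.measurePreserving_sub_left volume x').prod (measurePreserving_add_left volume xn)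

theorem norm_subReflect {m : ℕ} (x' : En m) (xn : ℝ) (y : En m × ℝ) :
    ‖subReflect x' xn y‖ = √(‖x' - y.1‖ ^ 2 + (xn + y.2) ^ 2) :=
  norm_splitLast_symm m _ _

theorem integrable_comp_subReflect_iff {m : ℕ} (x' : En m) (xn : ℝ) {F : Type*}
    [NormedAddCommGroup F] (f : ℝ → F) :
    Integrable (fun y : En m × ℝ => f √(‖x' - y.1‖ ^ 2 + (xn + y.2) ^ 2)) ↔
      Integrable (fun z : En (m + 1) => f ‖z‖) := by
  simp_rw [← norm_subReflect]
  exact (measurePreserving_subReflect x' xn).integrable_comp_emb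
    (subReflect x' xn).measurableEmbedding (g := fun z => f ‖z‖)

theorem integral_comp_subReflect {m : ℕ} (x' : En m) (xn : ℝ) {F : Type*}
    [NormedAddCommGroup F] [NormedSpace ℝ F] (f : ℝ → F) :
    ∫ y : En m × ℝ, f √(‖x' - y.1‖ ^ 2 + (xn + y.2) ^ 2) = ∫ z : En (m + 1), f ‖z‖ := by
  simp_rw [← norm_subReflect]
  exact (measurePreserving_subReflect x' xn).integral_comp' (fun z => f ‖z‖)

end EuclideanSpace

open EuclideanSpace

theorem setIntegral_Ioi_sq_le {a : ℝ → ℝ} {M L : ℝ} (hL : 0 ≤ L)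
    (hbound : ∀ x, 0 < x → |a x| ≤ M) (hvanish : ∀ x, L ≤ x → a x = 0) :
    ∫ x in Ioi 0, a x ^ 2 ≤ M ^ 2 * L := by
  have hsupp : ∫ x in Ioi 0, a x ^ 2 = ∫ x in Ioc 0 L, a x ^ 2 :=
    setIntegral_eq_of_subset_of_forall_sdiff_eq_zero measurableSet_Ioi Ioc_subset_Ioi_self
      fun x ⟨hx0, hxL⟩ => by simp [hvanish x (not_le.1 fun h => hxL ⟨hx0, h⟩).le]
  have hsq : ∀ x ∈ Ioc (0 : ℝ) L, ‖a x ^ 2‖ ≤ M ^ 2 := fun x hx => by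
    rw [Real.norm_eq_abs, abs_pow]
    exact pow_le_pow_left₀ (abs_nonneg _) (hbound x hx.1) 2
  calc ∫ x in Ioi 0, a x ^ 2 ≤ ‖∫ x in Ioc 0 L, a x ^ 2‖ := hsupp ▸ Real.le_norm_self _
    _ ≤ M ^ 2 * volume.real (Ioc 0 L) :=
      norm_setIntegral_le_of_norm_le_const measure_Ioc_lt_top hsq
    _ = M ^ 2 * L := by simp [hL]

section Aeps

variable {m : ℕ} {ρ₀ : ℝ → ℝ} {ε : ℝ} (δ : ℝ)

theorem aeps_succ (x' : En m) (xn : ℝ) : aeps (m + 1) ρ₀ ε δ x' xn =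
    ∫ y : En m × ℝ in ball x' δ ×ˢ Ioo 0 δ,
      ρ₀ (√(‖x' - y.1‖ ^ 2 + (xn + y.2) ^ 2) / ε) / ε ^ (m + 1) :=
  rfl

theorem aeps_eq_aeps_zero (x' : En m) (xn : ℝ) :
    aeps (m + 1) ρ₀ ε δ x' xn = aeps (m + 1) ρ₀ ε δ 0 xn := by
  let T : En m × ℝ → En m × ℝ := fun y => (x' - y.1, y.2)
  have hT : MeasurePreserving T volume volume := by
    rw [Measure.volume_eq_prod]
    exact (Measure.measurePreserving_sub_left volume x').prod (.id _)
  have hTe : MeasurableEmbedding T :=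
    (MeasurableEquiv.prodCongr (.subLeft x') (.refl ℝ)).measurableEmbedding
  have hpre : T ⁻¹' (ball 0 δ ×ˢ Ioo 0 δ) = ball x' δ ×ˢ Ioo 0 δ := by
    ext ⟨y₁, y₂⟩
    simp [T, dist_eq_norm, norm_sub_rev]
  rw [aeps_succ, aeps_succ, ← hT.setIntegral_preimage_emb hTe _ (ball 0 δ ×ˢ Ioo 0 δ), hpre]
  simp [T, norm_sub_rev]

theorem aeps_eq_zero_of_le {R : ℝ} (hε : 0 < ε) (hsupp : ∀ r, R ≤ |r| → ρ₀ r = 0)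
    (x' : En m) {xn : ℝ} (hxn : R * ε ≤ xn) : aeps (m + 1) ρ₀ ε δ x' xn = 0 := by
  rw [aeps_succ]
  refine setIntegral_eq_zero_of_forall_eq_zero fun y hy => ?_
  have hfar : R * ε ≤ √(‖x' - y.1‖ ^ 2 + (xn + y.2) ^ 2) :=
    calc R * ε ≤ xn + y.2 := by linarith [hy.2.1]
      _ ≤ √(‖x' - y.1‖ ^ 2 + (xn + y.2) ^ 2) := Real.le_sqrt_of_sq_le (by nlinarith)
  rw [hsupp _ ?_, zero_div]
  rwa [abs_of_nonneg (by positivity), le_div_iff₀ hε]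

theorem abs_aeps_le (hε : 0 < ε) (hρ : Integrable fun z : En (m + 1) => ρ₀ ‖z‖)
    (x' : En m) (xn : ℝ) : |aeps (m + 1) ρ₀ ε δ x' xn| ≤ ∫ z : En (m + 1), |ρ₀ ‖z‖| := by
  have hint := (integrable_comp_subReflect_iff x' xn fun r => |ρ₀ (r / ε)| / ε ^ (m + 1)).2
    ((integrable_fun_norm_div volume (f := fun r => |ρ₀ r|) hρ.abs hε).div_const _)
  rw [aeps_succ, ← Real.norm_eq_abs]
  calc _ ≤ ∫ y : En m × ℝ in ball x' δ ×ˢ Ioo 0 δ,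
          |ρ₀ (√(‖x' - y.1‖ ^ 2 + (xn + y.2) ^ 2) / ε)| / ε ^ (m + 1) :=
        norm_integral_le_of_norm_le hint.integrableOn
          (.of_forall fun y => by rw [Real.norm_eq_abs, abs_div, abs_of_pos (pow_pos hε _)])
    _ ≤ ∫ y : En m × ℝ, |ρ₀ (√(‖x' - y.1‖ ^ 2 + (xn + y.2) ^ 2) / ε)| / ε ^ (m + 1) :=
        setIntegral_le_integral hint (.of_forall fun _ => by positivity)
    _ = ∫ z : En (m + 1), |ρ₀ (‖z‖ / ε)| / ε ^ (m + 1) :=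
        integral_comp_subReflect x' xn fun r => |ρ₀ (r / ε)| / ε ^ (m + 1)
    _ = ∫ z : En (m + 1), |ρ₀ ‖z‖| := by
        rw [← integral_fun_norm_div volume (fun r => |ρ₀ r|) hε, finrank_euclideanSpace_fin]

end Aeps

theorem aeps_independence_and_bound_general
    (n : ℕ) (hn : 0 < n) (ρ₀ : ℝ → ℝ)
    (hint : Integrable ρ₀) :
    ∃ C : ℝ, 0 < C ∧ ∀ R : ℝ, 0 < R → (∀ r : ℝ, R ≤ |r| → ρ₀ r = 0) →
      ∀ δ : ℝ, 0 < δ → ∀ ε : ℝ, 0 < ε →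
        (∀ (x₁ x₂ : En (n - 1)) (xn : ℝ), aeps n ρ₀ ε δ x₁ xn = aeps n ρ₀ ε δ x₂ xn) ∧
        ∀ x' : En (n - 1),
          (∫ xn in Set.Ioi (0 : ℝ), (aeps n ρ₀ ε δ x' xn) ^ 2) ≤ C * R * ε := by
  obtain ⟨m, rfl⟩ : ∃ m, n = m + 1 := ⟨n - 1, (Nat.succ_pred_eq_of_pos hn).symm⟩
  set W := ∫ z : En (m + 1), |ρ₀ ‖z‖|
  refine ⟨W ^ 2 + 1, by positivity, fun R hR hsupp δ _ ε hε => ⟨?_, fun x' => ?_⟩⟩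
  · intro x₁ x₂ xn
    exact (aeps_eq_aeps_zero δ x₁ xn).trans (aeps_eq_aeps_zero δ x₂ xn).symm
  have hρ := integrable_fun_norm_of_eq_zero_of_le (volume : Measure (En (m + 1))) hint hsupp
  calc ∫ xn in Ioi 0, aeps (m + 1) ρ₀ ε δ x' xn ^ 2 ≤ W ^ 2 * (R * ε) :=
        setIntegral_Ioi_sq_le (by positivity) (fun xn _ => abs_aeps_le δ hε hρ x' xn)
          fun xn => aeps_eq_zero_of_le δ hε hsupp x'
    _ ≤ (W ^ 2 + 1) * R * ε := by nlinarith [mul_pos hR hε]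

/-- `a_ε` is independent of `x'` and satisfies
`‖a_ε‖²_{L²(ℝ₊)} ≤ C R ε`, where `C` depends only on `ρ` and `n`. -/
theorem aeps_independence_and_bound
    (n : ℕ) (hn : 0 < n) (ρ₀ : ℝ → ℝ)
    (hρ0 : ∀ r, 0 ≤ ρ₀ r) (heven : ∀ r, ρ₀ (-r) = ρ₀ r) (hint : Integrable ρ₀) :
    ∃ C : ℝ, 0 < C ∧ ∀ R : ℝ, 0 < R → (∀ r : ℝ, R ≤ |r| → ρ₀ r = 0) →
      ∀ δ : ℝ, 0 < δ → ∀ ε : ℝ, 0 < ε →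
        (∀ (x₁ x₂ : En (n - 1)) (xn : ℝ), aeps n ρ₀ ε δ x₁ xn = aeps n ρ₀ ε δ x₂ xn) ∧
        ∀ x' : En (n - 1),
          (∫ xn in Set.Ioi (0 : ℝ), (aeps n ρ₀ ε δ x' xn) ^ 2) ≤ C * R * ε :=
  aeps_independence_and_bound_general n hn ρ₀ hint
end
end
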